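/- For every k ≥ 2, the function f_k satisfies salt(f_k) ≥ 2^{k−2} and hence salt(f_k) ≥ 2^{s(f_k) − 2}; in particular the shift-invariant alternation of f_k is exponential in its sensitivity. -/

import Mathlib

/-!
A chain `0 = x⁰ ≺ ⋯ ≺ xⁿ = 1` for the shift `f_b` is the same thing as an order in which to flip
the coordinates of `b` one at a time, and its alternation counts how often `f` changes value along
this walk. By induction, from every start `f_k` admits a walk with `2^(k-1)` changes: for
`f_(k+1)`, walk through the subtree selected by the root bit, flip the root, then walk through the
other subtree, collecting `2^(k-1)` changes in each subtree. Hence `salt(f_k) ≥ 2^(k-1)`. On the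
other side, the `k` bits read along the root-to-leaf path at an input form a certificate there, so
`s(f_k) ≤ k`.
-/

open scoped Classical

/-- Pointwise XOR of Boolean vectors. -/
def bxor {n : ℕ} (x y : Fin n → Bool) : Fin n → Bool := fun i => Bool.xor (x i) (y i)

/-- Indicator vector of a set of coordinates. -/
def eB {n : ℕ} (B : Finset (Fin n)) : Fin n → Bool := fun i => decide (i ∈ B)

/-- Standard basis vector. -/
def eI {n : ℕ} (i : Fin n) : Fin n → Bool := fun j => decide (j = i)

/-- Sensitivity of `f` at `a`. -/
def sensAt {n : ℕ} (f : (Fin n → Bool) → Bool) (a : Fin n → Bool) : ℕ :=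
  (Finset.univ.filter fun i : Fin n => f (bxor a (eI i)) ≠ f a).card

/-- Sensitivity of `f`. -/
def sens {n : ℕ} (f : (Fin n → Bool) → Bool) : ℕ :=
  Finset.univ.sup fun a : Fin n → Bool => sensAt f a

/-- Block sensitivity of `f` at `a`: the largest number of pairwise disjoint nonempty
sensitive blocks. -/
def bsAt {n : ℕ} (f : (Fin n → Bool) → Bool) (a : Fin n → Bool) : ℕ :=
  Finset.univ.sup fun S : Finset (Finset (Fin n)) =>
    if (∀ B ∈ S, B.Nonempty ∧ f (bxor a (eB B)) ≠ f a) ∧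
       (∀ B ∈ S, ∀ C ∈ S, B ≠ C → Disjoint B C)
    then S.card else 0

/-- Block sensitivity of `f`. -/
def bs {n : ℕ} (f : (Fin n → Bool) → Bool) : ℕ :=
  Finset.univ.sup fun a : Fin n → Bool => bsAt f a

/-- `x` is a monotone chain `0^n = x^0 ≺ x^1 ≺ ⋯ ≺ x^n = 1^n` in the Boolean cube
(each step strictly increases, hence flips exactly one coordinate from 0 to 1). -/
def IsChainOn {n : ℕ} (x : Fin (n + 1) → Fin n → Bool) : Prop :=
  x 0 = (fun _ => false) ∧ x (Fin.last n) = (fun _ => true) ∧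
    ∀ i : Fin n, (∀ j, x i.castSucc j ≤ x i.succ j) ∧ x i.castSucc ≠ x i.succ

/-- Alternation of `f` along a chain `x`. -/
def altChain {n : ℕ} (f : (Fin n → Bool) → Bool) (x : Fin (n + 1) → Fin n → Bool) : ℕ :=
  (Finset.univ.filter fun i : Fin n => f (x i.succ) ≠ f (x i.castSucc)).card

/-- Alternation of `f`: maximal alternation along a chain. -/
noncomputable def altF {n : ℕ} (f : (Fin n → Bool) → Bool) : ℕ :=
  Finset.univ.sup fun x : Fin (n + 1) → Fin n → Bool =>
    if IsChainOn x then altChain f x else 0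

/-- Shift-invariant alternation: minimum alternation over all shifts of `f`. -/
noncomputable def saltF {n : ℕ} (f : (Fin n → Bool) → Bool) : ℕ :=
  (Finset.univ : Finset (Fin n → Bool)).inf' Finset.univ_nonempty
    fun b => altF fun x => f (bxor x b)
/-- The recursively defined decision-tree function family: `fTree 1 = id` on one bit, and
`fTree (k+1) (b, z, z') = fTree k z` if `b = 0`, `fTree k z'` if `b = 1`
(layout: bit 0 is `b`, bits `1..2^k-1` are `z`, bits `2^k..2^(k+1)-2` are `z'`). -/
def fTree : (k : ℕ) → (Fin (2 ^ k - 1) → Bool) → Bool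
  | 0, _ => false
  | 1, x => x ⟨0, by norm_num⟩
  | (k + 2), x =>
    if x ⟨0, by have h : (1:ℕ) < 2 ^ (k + 2) := Nat.one_lt_two_pow_iff.mpr (by omega); omega⟩ then
      fTree (k + 1) (fun j => x ⟨j.1 + 2 ^ (k + 1), by
        have hj := j.isLt
        have h1 : 0 < 2 ^ (k + 1) := pow_pos (by omega) _
        have h2 : 2 ^ (k + 2) = 2 ^ (k + 1) * 2 := pow_succ 2 (k + 1)
        omega⟩)
    else
      fTree (k + 1) (fun j => x ⟨j.1 + 1, by
        have hj := j.isLt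
        have h1 : 0 < 2 ^ (k + 1) := pow_pos (by omega) _
        have h2 : 2 ^ (k + 2) = 2 ^ (k + 1) * 2 := pow_succ 2 (k + 1)
        omega⟩)

section FlipWalk

variable {α β : Type*} [DecidableEq α] [DecidableEq β]

def flipAt (a : α → Bool) (i : α) : α → Bool := Function.update a i (!a i)

def flipAlt (f : (α → Bool) → Bool) : (α → Bool) → List α → ℕ
  | _, [] => 0
  | a, i :: l => (if f (flipAt a i) ≠ f a then 1 else 0) + flipAlt f (flipAt a i) l

theorem flipAlt_append (f : (α → Bool) → Bool) (a : α → Bool) (l₁ l₂ : List α) :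
    flipAlt f a (l₁ ++ l₂) = flipAlt f a l₁ + flipAlt f (l₁.foldl flipAt a) l₂ := by
  induction l₁ generalizing a with
  | nil => simp [flipAlt]
  | cons i l ih => simp only [List.cons_append, flipAlt, ih, List.foldl_cons]; omega

theorem foldl_flipAt_of_not_mem {a : α → Bool} {l : List α} {j : α} (hj : j ∉ l) :
    l.foldl flipAt a j = a j := by
  induction l generalizing a with
  | nil => rfl
  | cons i l ih =>
    rw [List.mem_cons, not_or] at hj
    rw [List.foldl_cons, ih hj.2, flipAt, Function.update_of_ne hj.1]

theorem foldl_flipAt_eq_xor (a : α → Bool) {l : List α} (hl : l.Nodup) :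
    l.foldl flipAt a = fun j => xor (a j) (decide (j ∈ l)) := by
  induction l generalizing a with
  | nil => simp
  | cons i l ih =>
    rw [List.nodup_cons] at hl
    funext j
    rw [List.foldl_cons, ih _ hl.2]
    by_cases hji : j = i
    · subst hji; simp [flipAt, hl.1]
    · simp [flipAt, hji]

theorem flipAlt_eq_sum (f : (α → Bool) → Bool) (a : α → Bool) (l : List α) :
    flipAlt f a l = ∑ i ∈ Finset.range l.length,
      if f ((l.take (i + 1)).foldl flipAt a) ≠ f ((l.take i).foldl flipAt a) then 1 else 0 := by
  induction l generalizing a with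
  | nil => rfl
  | cons i l ih =>
    rw [flipAlt, ih, List.length_cons, Finset.sum_range_succ', add_comm]
    rfl

theorem flipAlt_map {e : α → β} (he : Function.Injective e) {f : (β → Bool) → Bool}
    {g : (α → Bool) → Bool} {a : β → Bool}
    (hfg : ∀ x, (∀ j, j ∉ Set.range e → x j = a j) → f x = g (x ∘ e)) (l : List α) :
    flipAlt f a (l.map e) = flipAlt g (a ∘ e) l := by
  induction l generalizing a with
  | nil => rfl
  | cons i l ih =>
    have hcomp : flipAt a (e i) ∘ e = flipAt (a ∘ e) i :=
      Function.update_comp_eq_of_injective a he i _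
    have hout : ∀ j, j ∉ Set.range e → flipAt a (e i) j = a j := fun j hj =>
      Function.update_of_ne (fun h => hj ⟨i, h.symm⟩) _ _
    rw [List.map_cons, flipAlt, flipAlt, hfg _ hout, hfg a fun _ _ => rfl,
      ih fun x hx => hfg x fun j hj => (hx j hj).trans (hout j hj), hcomp]

end FlipWalk

section PrefixChain

variable {n : ℕ} {l : List (Fin n)}

def prefixChain (l : List (Fin n)) : Fin (n + 1) → Fin n → Bool :=
  fun i j => decide (j ∈ l.take i)

theorem List.Nodup.length_eq_of_forall_mem (hl : l.Nodup) (hcov : ∀ j, j ∈ l) :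
    l.length = n := by
  have huniv : l.toFinset = Finset.univ :=
    Finset.eq_univ_iff_forall.2 fun j => List.mem_toFinset.2 (hcov j)
  rw [← List.toFinset_card_of_nodup hl, huniv, Finset.card_univ, Fintype.card_fin]

theorem isChainOn_prefixChain (hl : l.Nodup) (hcov : ∀ j, j ∈ l) :
    IsChainOn (prefixChain l) := by
  have hlen := hl.length_eq_of_forall_mem hcov
  refine ⟨by funext j; simp [prefixChain], ?_, fun i => ⟨fun j => ?_, fun heq => ?_⟩⟩
  · funext j
    simp [prefixChain, List.take_of_length_le hlen.le, hcov]
  · simp only [prefixChain, Bool.le_iff_imp, decide_eq_true_eq, Fin.val_castSucc, Fin.val_succ]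
    exact fun h => List.take_subset_take_left l (Nat.le_succ i) h
  · have hi : (i : ℕ) < l.length := by omega
    have hnodup : (l.take (i + 1)).Nodup := hl.sublist (List.take_sublist _ _)
    rw [List.take_add_one, List.getElem?_eq_getElem hi, Option.toList_some,
      List.nodup_append] at hnodup
    have := congrFun heq l[(i : ℕ)]
    simp only [prefixChain, Fin.val_castSucc, Fin.val_succ, List.take_add_one,
      List.getElem?_eq_getElem hi, Option.toList_some, List.mem_append, List.mem_singleton,
      or_true, decide_true, decide_eq_true_eq] at this
    exact hnodup.2.2 _ this _ (List.mem_singleton_self _) rfl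

theorem bxor_prefixChain (hl : l.Nodup) (i : Fin (n + 1)) (b : Fin n → Bool) :
    bxor (prefixChain l i) b = (l.take i).foldl flipAt b := by
  rw [foldl_flipAt_eq_xor b (hl.sublist (List.take_sublist _ _))]
  funext j
  exact Bool.xor_comm _ _

theorem altChain_prefixChain (hl : l.Nodup) (hcov : ∀ j, j ∈ l)
    (f : (Fin n → Bool) → Bool) (b : Fin n → Bool) :
    altChain (fun x => f (bxor x b)) (prefixChain l) = flipAlt f b l := by
  rw [altChain, Finset.card_filter, flipAlt_eq_sum, hl.length_eq_of_forall_mem hcov]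
  simp only [bxor_prefixChain hl, Fin.val_succ, Fin.val_castSucc]
  exact Fin.sum_univ_eq_sum_range
    (fun i => if f ((l.take (i + 1)).foldl flipAt b) ≠ f ((l.take i).foldl flipAt b) then 1 else 0) n

end PrefixChain

theorem altChain_le_altF {n : ℕ} (f : (Fin n → Bool) → Bool) {x : Fin (n + 1) → Fin n → Bool}
    (hx : IsChainOn x) : altChain f x ≤ altF f := by
  calc altChain f x = if IsChainOn x then altChain f x else 0 := (if_pos hx).symm
    _ ≤ altF f := Finset.le_sup (f := fun x => if IsChainOn x then altChain f x else 0)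
      (Finset.mem_univ x)

theorem le_saltF_of_forall_exists_flipAlt {n N : ℕ} (f : (Fin n → Bool) → Bool)
    (h : ∀ b, ∃ l : List (Fin n), l.Nodup ∧ (∀ j, j ∈ l) ∧ N ≤ flipAlt f b l) :
    N ≤ saltF f := by
  refine Finset.le_inf' _ _ fun b _ => ?_
  obtain ⟨l, hl, hcov, hN⟩ := h b
  calc N ≤ flipAlt f b l := hN
    _ = altChain (fun x => f (bxor x b)) (prefixChain l) := (altChain_prefixChain hl hcov f b).symm
    _ ≤ _ := altChain_le_altF _ (isChainOn_prefixChain hl hcov)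

def treeRoot (k : ℕ) : Fin (2 ^ (k + 2) - 1) :=
  ⟨0, by have := Nat.one_lt_two_pow (n := k + 2) (by omega); omega⟩

/-- The embedding of the coordinates of the left (`c = false`) or right (`c = true`) subtree
into those of `fTree (k + 2)`, matching the layout in the definition of `fTree`. -/
def treeBranch (k : ℕ) (c : Bool) (j : Fin (2 ^ (k + 1) - 1)) : Fin (2 ^ (k + 2) - 1) :=
  have := j.isLt
  have : 2 ^ (k + 2) = 2 ^ (k + 1) * 2 := pow_succ 2 (k + 1)
  cond c ⟨j + 2 ^ (k + 1), by omega⟩ ⟨j + 1, by omega⟩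

theorem fTree_succ_succ (k : ℕ) (x : Fin (2 ^ (k + 2) - 1) → Bool) :
    fTree (k + 2) x = fTree (k + 1) (x ∘ treeBranch k (x (treeRoot k))) := by
  rw [fTree]
  split_ifs with h
  · rw [show x (treeRoot k) = true from h]; rfl
  · rw [show x (treeRoot k) = false from Bool.eq_false_iff.2 h]; rfl

theorem treeBranch_injective (k : ℕ) (c : Bool) : Function.Injective (treeBranch k c) := by
  intro i j h
  cases c <;> simpa [treeBranch, Fin.ext_iff] using h

theorem treeBranch_ne_treeRoot (k : ℕ) (c : Bool) (j : Fin (2 ^ (k + 1) - 1)) :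
    treeBranch k c j ≠ treeRoot k := by
  cases c <;> simp [treeBranch, treeRoot, Fin.ext_iff]

theorem treeBranch_ne_treeBranch_not (k : ℕ) (c : Bool) (i j : Fin (2 ^ (k + 1) - 1)) :
    treeBranch k c i ≠ treeBranch k (!c) j := by
  have := i.isLt
  have := j.isLt
  cases c <;> simp [treeBranch, Fin.ext_iff] <;> omega

theorem exists_treeBranch_eq (k : ℕ) {i : Fin (2 ^ (k + 2) - 1)} (hi : i ≠ treeRoot k) :
    ∃ c j, treeBranch k c j = i := by
  have := i.isLt
  have : 2 ^ (k + 2) = 2 ^ (k + 1) * 2 := pow_succ 2 (k + 1)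
  have hi0 : (i : ℕ) ≠ 0 := fun h => hi (Fin.ext h)
  by_cases hleft : (i : ℕ) < 2 ^ (k + 1)
  · exact ⟨false, ⟨i - 1, by omega⟩, Fin.ext (by simp [treeBranch]; omega)⟩
  · exact ⟨true, ⟨i - 2 ^ (k + 1), by omega⟩, Fin.ext (by simp [treeBranch]; omega)⟩

theorem fTree_succ_succ_of_root_eq (k : ℕ) {c : Bool} {x : Fin (2 ^ (k + 2) - 1) → Bool}
    (hx : x (treeRoot k) = c) : fTree (k + 2) x = fTree (k + 1) (x ∘ treeBranch k c) := by
  rw [fTree_succ_succ, hx]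

theorem flipAlt_fTree_map_treeBranch (k : ℕ) {c : Bool} {a : Fin (2 ^ (k + 2) - 1) → Bool}
    (ha : a (treeRoot k) = c) (l : List (Fin (2 ^ (k + 1) - 1))) :
    flipAlt (fTree (k + 2)) a (l.map (treeBranch k c)) =
      flipAlt (fTree (k + 1)) (a ∘ treeBranch k c) l :=
  flipAlt_map (treeBranch_injective k c) (fun _ hx => fTree_succ_succ_of_root_eq k <|
    (hx _ fun ⟨j, hj⟩ => treeBranch_ne_treeRoot k c j hj).trans ha) l

theorem exists_flipAlt_fTree_ge (k : ℕ) (a : Fin (2 ^ (k + 1) - 1) → Bool) :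
    ∃ l : List (Fin (2 ^ (k + 1) - 1)), l.Nodup ∧ (∀ j, j ∈ l) ∧
      2 ^ k ≤ flipAlt (fTree (k + 1)) a l := by
  induction k with
  | zero =>
    refine ⟨[⟨0, by norm_num⟩], List.nodup_singleton _, fun j => ?_, ?_⟩
    · have := j.isLt
      simp only [List.mem_singleton, Fin.ext_iff]
      norm_num at this ⊢
    · simp [flipAlt, flipAt, fTree]
  | succ k ih =>
    set c := a (treeRoot k)
    obtain ⟨l₁, hl₁, hcov₁, h₁⟩ := ih (a ∘ treeBranch k c)
    set a₁ := (l₁.map (treeBranch k c)).foldl flipAt a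
    have ha₁ : a₁ (treeRoot k) = c := foldl_flipAt_of_not_mem (by
      simpa using fun j _ => treeBranch_ne_treeRoot k c j)
    set a₂ := flipAt a₁ (treeRoot k)
    have ha₂ : a₂ (treeRoot k) = !c := by simp [a₂, flipAt, ha₁]
    obtain ⟨l₂, hl₂, hcov₂, h₂⟩ := ih (a₂ ∘ treeBranch k (!c))
    -- walk through the subtree the root points to, then flip the root, then the other subtree
    refine ⟨l₁.map (treeBranch k c) ++ treeRoot k :: l₂.map (treeBranch k (!c)), ?_, ?_, ?_⟩
    · simp only [List.nodup_append, List.nodup_cons, List.mem_cons, List.mem_map]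
      refine ⟨hl₁.map (treeBranch_injective k c), ⟨?_, hl₂.map (treeBranch_injective k _)⟩, ?_⟩
      · rintro ⟨j, -, hj⟩
        exact treeBranch_ne_treeRoot k _ j hj
      · rintro _ ⟨i, -, rfl⟩ _ (rfl | ⟨j, -, rfl⟩)
        · exact treeBranch_ne_treeRoot k c i
        · exact treeBranch_ne_treeBranch_not k c i j
    · intro i
      by_cases hi : i = treeRoot k
      · simp [hi]
      obtain ⟨c', j, rfl⟩ := exists_treeBranch_eq k hi
      rcases Bool.eq_or_eq_not c' c with rfl | rfl
      · exact List.mem_append_left _ (List.mem_map_of_mem (hcov₁ j))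
      · exact List.mem_append_right _ (List.mem_cons_of_mem _ (List.mem_map_of_mem (hcov₂ j)))
    · calc 2 ^ (k + 1) = 2 ^ k + 2 ^ k := by ring
        _ ≤ flipAlt (fTree (k + 1)) (a ∘ treeBranch k c) l₁ +
            flipAlt (fTree (k + 1)) (a₂ ∘ treeBranch k (!c)) l₂ := add_le_add h₁ h₂
        _ = flipAlt (fTree (k + 2)) a (l₁.map (treeBranch k c)) +
            flipAlt (fTree (k + 2)) a₂ (l₂.map (treeBranch k (!c))) := by
          rw [flipAlt_fTree_map_treeBranch k rfl, flipAlt_fTree_map_treeBranch k ha₂]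
        _ ≤ _ := by
          rw [flipAlt_append, flipAlt]
          exact Nat.add_le_add_left (Nat.le_add_left _ _) _

theorem sensAt_le_card_of_forall_eq {n : ℕ} (f : (Fin n → Bool) → Bool) (a : Fin n → Bool)
    (S : Finset (Fin n)) (hS : ∀ x, (∀ i ∈ S, x i = a i) → f x = f a) : sensAt f a ≤ S.card := by
  refine Finset.card_le_card fun i hi => ?_
  by_contra hiS
  refine (Finset.mem_filter.1 hi).2 (hS _ fun j hj => ?_)
  have hji : j ≠ i := fun h => hiS (h ▸ hj)
  simp [bxor, eI, hji]

theorem exists_certificate_fTree (k : ℕ) (a : Fin (2 ^ (k + 1) - 1) → Bool) :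
    ∃ S : Finset (Fin (2 ^ (k + 1) - 1)), S.card ≤ k + 1 ∧
      ∀ x, (∀ i ∈ S, x i = a i) → fTree (k + 1) x = fTree (k + 1) a := by
  induction k with
  | zero =>
    refine ⟨Finset.univ, by simp, fun x hx => ?_⟩
    rw [funext fun i => hx i (Finset.mem_univ i)]
  | succ k ih =>
    set c := a (treeRoot k)
    obtain ⟨S, hS, hSa⟩ := ih (a ∘ treeBranch k c)
    refine ⟨insert (treeRoot k) (S.map ⟨treeBranch k c, treeBranch_injective k c⟩), ?_, ?_⟩
    · exact (Finset.card_insert_le _ _).trans (by simpa using hS)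
    · intro x hx
      have hroot : x (treeRoot k) = c := hx _ (Finset.mem_insert_self _ _)
      rw [fTree_succ_succ_of_root_eq k hroot, fTree_succ_succ_of_root_eq k rfl]
      exact hSa _ fun i hi => hx _ (Finset.mem_insert_of_mem (Finset.mem_map_of_mem _ hi))

theorem sens_fTree_le (k : ℕ) : sens (fTree (k + 1)) ≤ k + 1 :=
  Finset.sup_le fun a _ =>
    let ⟨S, hS, hSa⟩ := exists_certificate_fTree k a
    (sensAt_le_card_of_forall_eq _ a S hSa).trans hS

/-- for every `k ≥ 2`, `salt(f_k) ≥ 2^(k-2)` and hence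
`salt(f_k) ≥ 2^(s(f_k) - 2)`: the shift-invariant alternation of `f_k` is exponential in
its sensitivity. -/
theorem stmt7 (k : ℕ) (hk : 2 ≤ k) :
    2 ^ (k - 2) ≤ saltF (fTree k) ∧ 2 ^ (sens (fTree k) - 2) ≤ saltF (fTree k) := by
  obtain ⟨k, rfl⟩ : ∃ k', k = k' + 1 := ⟨k - 1, by omega⟩
  have hsalt : 2 ^ k ≤ saltF (fTree (k + 1)) :=
    le_saltF_of_forall_exists_flipAlt _ (exists_flipAlt_fTree_ge k)
  have hsens := sens_fTree_le k
  exact ⟨(Nat.pow_le_pow_right two_pos (by omega)).trans hsalt,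
    (Nat.pow_le_pow_right two_pos (by omega)).trans hsalt⟩
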